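/- arXiv:1804.00055 — 2 statements merged into one kernel-verified Lean document; each statement's English description precedes it below -/
import Mathlib

section
/- Let A = {a_1, …, a_k} be a set of consecutive integers, S_A the symmetric group permuting A, and T a standard Young tableau of shape λ whose entries include A. If two elements of A lie in the same column of T, then Σ_{π ∈ S_A} λ(π)|T⟩ = 0, where λ is the Young orthogonal representation of shape λ. -/
/-- A standard Young tableau of shape `μ`, recorded by the position `pos k` of the
entry `k` (entries are `0`-indexed, running over `0, …, μ.card - 1`). Entries
strictly increase along rows (left to right) and down columns. -/
structure SYT (μ : YoungDiagram) where
  pos : ℕ → ℕ × ℕ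
  mem : ∀ k, k < μ.card → pos k ∈ μ.cells
  surj : ∀ c ∈ μ.cells, ∃ k, k < μ.card ∧ pos k = c
  inj : ∀ k l, k < μ.card → l < μ.card → pos k = pos l → k = l
  row_incr : ∀ k l, k < μ.card → l < μ.card →
    (pos k).1 = (pos l).1 → (pos k).2 < (pos l).2 → k < l
  col_incr : ∀ k l, k < μ.card → l < μ.card →
    (pos k).2 = (pos l).2 → (pos k).1 < (pos l).1 → k < l
  out : ∀ k, μ.card ≤ k → pos k = (0, 0)

/-- Entries `k` and `k+1` lie in the same row of `T`. -/
def SYT.sameRow {μ : YoungDiagram} (T : SYT μ) (k : ℕ) : Prop :=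
  (T.pos k).1 = (T.pos (k + 1)).1

/-- Entries `k` and `k+1` lie in the same column of `T`. -/
def SYT.sameCol {μ : YoungDiagram} (T : SYT μ) (k : ℕ) : Prop :=
  (T.pos k).2 = (T.pos (k + 1)).2

/-- `T'` is the tableau `(k, k+1) T` obtained from `T` by exchanging the entries
`k` and `k+1`. -/
def SYT.IsSwapped {μ : YoungDiagram} (T T' : SYT μ) (k : ℕ) : Prop :=
  T'.pos k = T.pos (k + 1) ∧ T'.pos (k + 1) = T.pos k ∧
    ∀ m, m ≠ k → m ≠ k + 1 → T'.pos m = T.pos m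

/-- The (signed) axial Manhattan distance from the box of `k` to the box of `k+1` in `T`:
steps up plus steps right minus steps left minus steps down. -/
def SYT.axialDist {μ : YoungDiagram} (T : SYT μ) (k : ℕ) : ℤ :=
  (((T.pos (k + 1)).2 : ℤ) - ((T.pos k).2 : ℤ)) +
    (((T.pos k).1 : ℤ) - ((T.pos (k + 1)).1 : ℤ))

/-- The coefficient `a_k^T`, the reciprocal of the axial distance between the boxes of
`k` and `k+1`. -/
noncomputable def SYT.aCoef {μ : YoungDiagram} (T : SYT μ) (k : ℕ) : ℝ :=
  ((T.axialDist k : ℤ) : ℝ)⁻¹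

/-- The coefficient `b_k^T = √(1 - (a_k^T)²)`. -/
noncomputable def SYT.bCoef {μ : YoungDiagram} (T : SYT μ) (k : ℕ) : ℝ :=
  Real.sqrt (1 - (T.aCoef k) ^ 2)

/-- `ρ`, together with the family of basis vectors `vec` indexed by the standard Young
tableaux of shape `μ`, satisfies the defining rules of the Young orthogonal
(Young–Yamanouchi) representation: adjacent transpositions `(k, k+1)` act by `+1` on `|T⟩`
if `k, k+1` are in the same row of `T`, by `-1` if in the same column, and otherwise by
`(k,k+1)|T⟩ = a|T⟩ + b|(k,k+1)T⟩` with `a` the reciprocal axial distance and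
`b = √(1-a²)`. -/
def YoungOrthogonalRules {μ : YoungDiagram} {V : Type*} [AddCommGroup V] [Module ℝ V]
    (ρ : Equiv.Perm ℕ →* (V →ₗ[ℝ] V)) (vec : SYT μ → V) : Prop :=
  ∀ (T : SYT μ) (k : ℕ), k + 1 < μ.card →
    (T.sameRow k → ρ (Equiv.swap k (k + 1)) (vec T) = vec T) ∧
    (T.sameCol k → ρ (Equiv.swap k (k + 1)) (vec T) = -vec T) ∧
    (¬T.sameRow k → ¬T.sameCol k → ∀ T' : SYT μ, SYT.IsSwapped T T' k →
      ρ (Equiv.swap k (k + 1)) (vec T) = T.aCoef k • vec T + T.bCoef k • vec T')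

/-!
Let `S = ∑_{σ ∈ S_A} ρ(σ)`. Reindexing the sum gives `S ρ(s_k) = S` for every transposition
`s_k = (k, k+1)` inside `A`. If `k, k+1` share a column of `T`, then `S|T⟩ = -S|T⟩`, so
`S|T⟩ = 0`. If they share neither a row nor a column, then `S|T⟩ = a S|T⟩ + b S|s_k T⟩` with
`a ≠ 1` (axial distance `1` would put the box of `k + 1` strictly south-east or north-west of
that of `k`, and the corner box between them would hold an entry strictly between `k` and
`k + 1`), so `S|s_k T⟩ = 0` forces `S|T⟩ = 0`.

Now let `x < y` in `A` share a column, and let `x, x+1, …, k` be the entries in the row of `x`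
with `k + 1` outside it. Either `k, k+1` share a column, or swapping them yields a tableau in
which the run is shorter or the column contains a pair of entries closer in value. A double
induction, on `y - x` and on the length of the run, ends in the first case.
-/

open Equiv Finset

theorem Nat.exists_forall_Icc_and_not_succ {p : ℕ → Prop} {x y : ℕ} (hxy : x < y) (hx : p x)
    (hy : ¬p y) : ∃ k, x ≤ k ∧ k < y ∧ (∀ t, x ≤ t → t ≤ k → p t) ∧ ¬p (k + 1) := by
  classical
  have hex : ∃ n, ¬p (x + n + 1) := ⟨y - x - 1, by rwa [show x + (y - x - 1) + 1 = y by omega]⟩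
  refine ⟨x + Nat.find hex, by omega, ?_, fun t hxt htk => ?_, Nat.find_spec hex⟩
  · by_contra! hle
    exact Nat.find_min hex (m := y - x - 1) (by omega)
      (by rwa [show x + (y - x - 1) + 1 = y by omega])
  · obtain rfl | hlt := hxt.eq_or_lt
    · exact hx
    · by_contra hpt
      exact Nat.find_min hex (m := t - x - 1) (by omega)
        (by rwa [show x + (t - x - 1) + 1 = t by omega])

theorem lt_of_swap_lt_swap {k m l : ℕ} (h : swap k (k + 1) m < swap k (k + 1) l) :
    m < l ∨ (m = k + 1 ∧ l = k) := by
  simp only [swap_apply_def] at h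
  split_ifs at h <;> omega

theorem swap_succ_apply_lt {k m n : ℕ} (hk : k + 1 < n) (hm : m < n) :
    swap k (k + 1) m < n := by
  rw [swap_apply_def]
  split_ifs <;> omega

section Symmetrizer

variable {α R V : Type*} [DecidableEq α]

section Semiring

variable [Semiring R] [AddCommMonoid V] [Module R V]

def symmetrizer (ρ : Perm α →* Module.End R V) (A : Finset α) : Module.End R V :=
  ∑ σ : Perm A, ρ (Perm.ofSubtype σ)

theorem symmetrizer_apply (ρ : Perm α →* Module.End R V) (A : Finset α) (v : V) :
    symmetrizer ρ A v = ∑ σ : Perm A, ρ (σ.extendDomain (Equiv.refl A)) v := by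
  rw [symmetrizer, LinearMap.sum_apply]
  rfl

theorem symmetrizer_mul_ofSubtype (ρ : Perm α →* Module.End R V) (A : Finset α)
    (τ : Perm A) : symmetrizer ρ A * ρ (Perm.ofSubtype τ) = symmetrizer ρ A := by
  simp only [symmetrizer, Finset.sum_mul, ← map_mul]
  exact Equiv.sum_comp (Equiv.mulRight τ) fun σ => ρ (Perm.ofSubtype σ)

theorem symmetrizer_apply_swap (ρ : Perm α →* Module.End R V) {A : Finset α} {i j : α}
    (hi : i ∈ A) (hj : j ∈ A) (v : V) :
    symmetrizer ρ A (ρ (swap i j) v) = symmetrizer ρ A v := by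
  rw [← Perm.ofSubtype_swap_eq (p := (· ∈ A)) ⟨i, hi⟩ ⟨j, hj⟩, ← Module.End.mul_apply,
    symmetrizer_mul_ofSubtype]

end Semiring

variable [DivisionRing R] [AddCommGroup V] [Module R V] (ρ : Perm α →* Module.End R V)
  {A : Finset α} {i j : α}

theorem symmetrizer_eq_zero_of_swap_eq_neg [CharZero R] (hi : i ∈ A) (hj : j ∈ A) {v : V}
    (h : ρ (swap i j) v = -v) : symmetrizer ρ A v = 0 := by
  have hneg : symmetrizer ρ A v = -symmetrizer ρ A v := by
    rw [← map_neg, ← h, symmetrizer_apply_swap ρ hi hj]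
  have htwo : (2 : R) • symmetrizer ρ A v = 0 := by
    rw [two_smul]
    nth_rw 1 [hneg]
    exact neg_add_cancel _
  exact (smul_eq_zero.mp htwo).resolve_left two_ne_zero

theorem symmetrizer_eq_zero_of_swap_eq_smul_add (hi : i ∈ A) (hj : j ∈ A) {v w : V} {a b : R}
    (h : ρ (swap i j) v = a • v + b • w) (ha : a ≠ 1) (hw : symmetrizer ρ A w = 0) :
    symmetrizer ρ A v = 0 := by
  have hfix : symmetrizer ρ A v = a • symmetrizer ρ A v :=
    calc symmetrizer ρ A v = symmetrizer ρ A (ρ (swap i j) v) :=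
          (symmetrizer_apply_swap ρ hi hj v).symm
      _ = a • symmetrizer ρ A v := by
          rw [h, map_add, map_smul, map_smul, hw, smul_zero, add_zero]
  have hker : (1 - a) • symmetrizer ρ A v = 0 := by
    rw [sub_smul, one_smul, sub_eq_zero]
    exact hfix
  exact (smul_eq_zero.mp hker).resolve_left (sub_ne_zero.mpr ha.symm)

end Symmetrizer

namespace SYT

variable {μ : YoungDiagram} (T : SYT μ)

theorem exists_between_of_lt_of_lt {k l : ℕ} (hk : k < μ.card) (hl : l < μ.card)
    (hrow : (T.pos k).1 < (T.pos l).1) (hcol : (T.pos k).2 < (T.pos l).2) :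
    ∃ e, k < e ∧ e < l := by
  have hcorner : ((T.pos k).1, (T.pos l).2) ∈ μ := μ.up_left_mem hrow.le le_rfl (T.mem l hl)
  obtain ⟨e, he, hpos⟩ := T.surj _ hcorner
  exact ⟨e, T.row_incr k e hk he (by simp [hpos]) (by simpa [hpos]),
    T.col_incr e l he hl (by simp [hpos]) (by simpa [hpos])⟩

theorem axialDist_ne_one {k : ℕ} (hk : k + 1 < μ.card) (hrow : ¬T.sameRow k)
    (hcol : ¬T.sameCol k) : T.axialDist k ≠ 1 := by
  have not_se : ¬((T.pos k).1 < (T.pos (k + 1)).1 ∧ (T.pos k).2 < (T.pos (k + 1)).2) :=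
    fun ⟨h₁, h₂⟩ => by
      obtain ⟨e, _, _⟩ := T.exists_between_of_lt_of_lt (by omega) hk h₁ h₂
      omega
  have not_nw : ¬((T.pos (k + 1)).1 < (T.pos k).1 ∧ (T.pos (k + 1)).2 < (T.pos k).2) :=
    fun ⟨h₁, h₂⟩ => by
      obtain ⟨e, _, _⟩ := T.exists_between_of_lt_of_lt hk (by omega) h₁ h₂
      omega
  unfold sameRow at hrow
  unfold sameCol at hcol
  unfold axialDist
  omega

theorem aCoef_ne_one {k : ℕ} (hk : k + 1 < μ.card) (hrow : ¬T.sameRow k)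
    (hcol : ¬T.sameCol k) : T.aCoef k ≠ 1 := by
  rw [aCoef, inv_ne_one, ← Int.cast_one, Ne, Int.cast_inj]
  exact T.axialDist_ne_one hk hrow hcol

def swapEntries {k : ℕ} (hk : k + 1 < μ.card) (hrow : ¬T.sameRow k) (hcol : ¬T.sameCol k) :
    SYT μ where
  pos m := T.pos (swap k (k + 1) m)
  mem m hm := T.mem _ (swap_succ_apply_lt hk hm)
  surj c hc := by
    obtain ⟨e, he, hpos⟩ := T.surj c hc
    exact ⟨swap k (k + 1) e, swap_succ_apply_lt hk he, by simpa⟩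
  inj m l hm hl h :=
    (swap k (k + 1)).injective (T.inj _ _ (swap_succ_apply_lt hk hm) (swap_succ_apply_lt hk hl) h)
  row_incr m l hm hl h₁ h₂ := by
    refine (lt_of_swap_lt_swap
      (T.row_incr _ _ (swap_succ_apply_lt hk hm) (swap_succ_apply_lt hk hl) h₁ h₂)).resolve_right ?_
    rintro ⟨rfl, rfl⟩
    simp only [swap_apply_left, swap_apply_right] at h₁
    exact hrow h₁
  col_incr m l hm hl h₁ h₂ := by
    refine (lt_of_swap_lt_swap
      (T.col_incr _ _ (swap_succ_apply_lt hk hm) (swap_succ_apply_lt hk hl) h₁ h₂)).resolve_right ?_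
    rintro ⟨rfl, rfl⟩
    simp only [swap_apply_left, swap_apply_right] at h₁
    exact hcol h₁
  out m hm := by
    rw [swap_apply_of_ne_of_ne (by omega) (by omega)]
    exact T.out m hm

theorem isSwapped_swapEntries {k : ℕ} (hk : k + 1 < μ.card) (hrow : ¬T.sameRow k)
    (hcol : ¬T.sameCol k) : T.IsSwapped (T.swapEntries hk hrow hcol) k :=
  ⟨by simp [swapEntries], by simp [swapEntries],
    fun m h₁ h₂ => by simp [swapEntries, swap_apply_of_ne_of_ne h₁ h₂]⟩

end SYT

namespace YoungOrthogonalRules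

variable {μ : YoungDiagram} {V : Type*} [AddCommGroup V] [Module ℝ V]
  {ρ : Perm ℕ →* (V →ₗ[ℝ] V)} {vec : SYT μ → V} {A : Finset ℕ}

theorem symmetrizer_vec_eq_zero_of_not_sameRow (hrules : YoungOrthogonalRules ρ vec)
    {T : SYT μ} {k : ℕ} (hkA : k ∈ A) (hk1A : k + 1 ∈ A) (hk : k + 1 < μ.card) (hrow : ¬T.sameRow k)
    (hswap : ∀ T', T.IsSwapped T' k → ¬T.sameCol k → symmetrizer ρ A (vec T') = 0) :
    symmetrizer ρ A (vec T) = 0 := by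
  obtain ⟨-, hcolRule, hswapRule⟩ := hrules T k hk
  by_cases hcol : T.sameCol k
  · exact symmetrizer_eq_zero_of_swap_eq_neg ρ hkA hk1A (hcolRule hcol)
  · have hT' := T.isSwapped_swapEntries hk hrow hcol
    exact symmetrizer_eq_zero_of_swap_eq_smul_add ρ hkA hk1A (hswapRule hrow hcol _ hT')
      (T.aCoef_ne_one hk hrow hcol) (hswap _ hT' hcol)

theorem symmetrizer_vec_eq_zero_of_rowRun (hrules : YoungOrthogonalRules ρ vec) {x y : ℕ}
    (hA : Icc x y ⊆ A) (hy : y < μ.card)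
    (ih : ∀ (T : SYT μ) (x' y' : ℕ), y' - x' < y - x → x' < y' → Icc x' y' ⊆ A →
      y' < μ.card → (T.pos x').2 = (T.pos y').2 → symmetrizer ρ A (vec T) = 0)
    (k : ℕ) (hxk : x ≤ k) :
    ∀ T : SYT μ, k < y → (T.pos x).2 = (T.pos y).2 →
      (∀ t, x ≤ t → t ≤ k → (T.pos t).1 = (T.pos x).1) → (T.pos (k + 1)).1 ≠ (T.pos x).1 →
      symmetrizer ρ A (vec T) = 0 := by
  have hmem : ∀ t, x ≤ t → t ≤ y → t ∈ A := fun t hxt hty => hA (mem_Icc.mpr ⟨hxt, hty⟩)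
  induction k, hxk using Nat.le_induction with
  | base =>
    intro T hxy hcol _ hexit
    refine hrules.symmetrizer_vec_eq_zero_of_not_sameRow (hmem x le_rfl hxy.le)
      (hmem (x + 1) (by omega) hxy) (by omega) (fun h => hexit h.symm) ?_
    rintro T' ⟨-, hx', hfix⟩ hcol'
    have hy' : x + 1 ≠ y := by
      rintro rfl
      exact hcol' hcol
    refine ih T' (x + 1) y (by omega) (by omega) ((Icc_subset_Icc (by omega) le_rfl).trans hA)
      hy ?_
    rw [hx', hfix y (by omega) hy'.symm]
    exact hcol
  | succ k hxk ihk =>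
    intro T hky hcol hrun hexit
    refine hrules.symmetrizer_vec_eq_zero_of_not_sameRow (hmem (k + 1) (by omega) hky.le)
      (hmem (k + 2) (by omega) hky) (by omega)
      (fun h => hexit (h ▸ hrun (k + 1) (by omega) le_rfl)) ?_
    rintro T' ⟨hk', -, hfix⟩ -
    have hx : T'.pos x = T.pos x := hfix x (by omega) (by omega)
    obtain rfl | hlt := (show k + 2 ≤ y by omega).eq_or_lt
    · refine ih T' x (k + 1) (by omega) (by omega) ((Icc_subset_Icc le_rfl (by omega)).trans hA)
        (by omega) ?_
      rw [hx, hk']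
      exact hcol
    · refine ihk T' (by omega) ?_ (fun t hxt htk => ?_) ?_
      · rw [hx, hfix y (by omega) (by omega)]
        exact hcol
      · rw [hx, hfix t (by omega) (by omega)]
        exact hrun t hxt (by omega)
      · rw [hx, hk']
        exact hexit

theorem symmetrizer_vec_eq_zero_of_sameCol (hrules : YoungOrthogonalRules ρ vec)
    {T : SYT μ} {x y : ℕ} (hxy : x < y) (hA : Icc x y ⊆ A) (hy : y < μ.card)
    (hcol : (T.pos x).2 = (T.pos y).2) :
    symmetrizer ρ A (vec T) = 0 := by
  induction hd : y - x using Nat.strong_induction_on generalizing T x y with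
  | _ d ih =>
    have hrow : (T.pos y).1 ≠ (T.pos x).1 := fun h =>
      hxy.ne (T.inj x y (by omega) hy (Prod.ext h.symm hcol))
    obtain ⟨k, hxk, hky, hrun, hexit⟩ :=
      Nat.exists_forall_Icc_and_not_succ (p := fun t => (T.pos t).1 = (T.pos x).1) hxy rfl hrow
    exact hrules.symmetrizer_vec_eq_zero_of_rowRun hA hy
      (fun _ _ _ hlt hxy' hA' hy' hcol' => ih _ (hd ▸ hlt) hxy' hA' hy' hcol' rfl)
      k hxk T hky hcol hrun hexit

end YoungOrthogonalRules

/-- Let `A = {a, …, b}` be a set of consecutive integers whose elements all occur as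
entries of the standard Young tableau `T` of shape `μ`, and let `S_A` be the subgroup of
permutations of `A` (embedded into the permutations of `ℕ` by fixing everything outside
`A`). If two elements of `A` lie in the same column of `T`, then
`Σ_{π ∈ S_A} λ(π)|T⟩ = 0` in the Young orthogonal representation. -/
theorem young_orthogonal_vertical_annihilates {μ : YoungDiagram} {V : Type*}
    [AddCommGroup V] [Module ℝ V] (ρ : Equiv.Perm ℕ →* (V →ₗ[ℝ] V)) (vec : SYT μ → V)
    (hrules : YoungOrthogonalRules ρ vec)
    (T : SYT μ) (a b : ℕ) (A : Finset ℕ) (hA : A = Finset.Icc a b)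
    (hsub : ∀ x ∈ A, x < μ.card)
    (hcolumn : ∃ x ∈ A, ∃ y ∈ A, x ≠ y ∧ (T.pos x).2 = (T.pos y).2) :
    ∑ σ : Equiv.Perm {x : ℕ // x ∈ A},
      ρ (σ.extendDomain (Equiv.refl {x : ℕ // x ∈ A})) (vec T) = 0 := by
  obtain ⟨x, hx, y, hy, hne, hcol⟩ := hcolumn
  have hIcc : ∀ {s t}, s ∈ A → t ∈ A → Icc s t ⊆ A := fun hs ht => by
    subst hA
    exact Icc_subset_Icc (mem_Icc.mp hs).1 (mem_Icc.mp ht).2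
  rw [← symmetrizer_apply]
  rcases hne.lt_or_gt with hxy | hyx
  · exact hrules.symmetrizer_vec_eq_zero_of_sameCol hxy (hIcc hx hy) (hsub y hy) hcol
  · exact hrules.symmetrizer_vec_eq_zero_of_sameCol hyx (hIcc hy hx) (hsub x hx) hcol.symm
end

section
/- The total dimension identity of Schur-Weyl duality: d^n = Σ_λ s_λ(d) · f^λ, where the sum runs over partitions λ of n with at most d parts, f^λ is the number of standard Young tableaux of shape λ, and s_λ(d) is the number of semistandard Young tableaux of shape λ with entries in {1,…,d}. -/
/-- The number `s_λ(d)` of semistandard Young tableaux of shape `λ` with entries in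
`{1, …, d}` (here encoded with `0`-indexed entries, i.e. entries in `{0, …, d-1}`). -/
noncomputable def ssytCount (d : ℕ) (lam : YoungDiagram) : ℕ :=
  Nat.card {T : SemistandardYoungTableau lam // ∀ i j : ℕ, (i, j) ∈ lam → T i j < d}

/-- A standard Young tableau of shape `λ` with `n = λ.card` boxes, encoded as a bijection
`Fin n ≃ cells of λ` whose entries strictly increase along rows and columns. -/
def IsStandard {lam : YoungDiagram} {n : ℕ} (T : Fin n ≃ {c : ℕ × ℕ // c ∈ lam.cells}) :
    Prop :=
  (∀ a b : Fin n, ((T a : ℕ × ℕ)).1 = ((T b : ℕ × ℕ)).1 →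
      ((T a : ℕ × ℕ)).2 < ((T b : ℕ × ℕ)).2 → a < b) ∧
  (∀ a b : Fin n, ((T a : ℕ × ℕ)).2 = ((T b : ℕ × ℕ)).2 →
      ((T a : ℕ × ℕ)).1 < ((T b : ℕ × ℕ)).1 → a < b)

/-- The number `f^λ` of standard Young tableaux of shape `λ`, where `n = λ.card`. -/
noncomputable def sytCount (n : ℕ) (lam : YoungDiagram) : ℕ :=
  Nat.card {T : Fin n ≃ {c : ℕ × ℕ // c ∈ lam.cells} // IsStandard T}

/-!
Both sides satisfy the same recursion in `n`. Row insertion of a letter `x < d` into a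
semistandard tableau of shape `λ` creates exactly one new cell, at an addable cell `c` of `λ`, and
reverse row insertion starting from `c` undoes it; this gives the Pieri rule
`d · s_λ(d) = Σ_c s_{λ+c}(d)`. Deleting the largest entry of a standard tableau of shape `μ` frees
a removable cell, so `f^μ = Σ_c f^{μ-c}`. Since pairs `(λ, λ + c)` with `c` addable are the pairs
`(μ - c, μ)` with `c` removable, `d · Σ_{|λ| = n} s_λ(d) f^λ = Σ_{|μ| = n+1} s_μ(d) f^μ`.
Shapes with more than `d` rows contribute nothing, since the entries of the first column of a
semistandard tableau strictly increase.
-/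

open Finset

/-! ### Addable and removable cells -/

namespace YoungDiagram

variable {μ : YoungDiagram} {c : ℕ × ℕ}

def IsAddable (μ : YoungDiagram) (c : ℕ × ℕ) : Prop :=
  c ∉ μ ∧ ∀ x < c, x ∈ μ

def IsRemovable (μ : YoungDiagram) (c : ℕ × ℕ) : Prop :=
  c ∈ μ ∧ ∀ x, c < x → x ∉ μ

theorem IsAddable.isLowerSet_insert (hc : IsAddable μ c) :
    IsLowerSet (↑(insert c μ.cells) : Set (ℕ × ℕ)) := by
  intro y x hxy hy
  simp only [coe_insert, Set.mem_insert_iff, mem_coe, mem_cells] at hy ⊢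
  rcases hy with rfl | hy
  · exact (eq_or_lt_of_le hxy).imp id (hc.2 x)
  · exact Or.inr (μ.isLowerSet hxy hy)

theorem IsRemovable.isLowerSet_erase (hc : IsRemovable μ c) :
    IsLowerSet (↑(μ.cells.erase c) : Set (ℕ × ℕ)) := by
  intro y x hxy hy
  simp only [coe_erase, Set.mem_sdiff, mem_coe, mem_cells, Set.mem_singleton_iff] at hy ⊢
  refine ⟨μ.isLowerSet hxy hy.1, ?_⟩
  rintro rfl
  exact hc.2 y (lt_of_le_of_ne hxy (Ne.symm hy.2)) hy.1

open Classical in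
/-- Equal to `μ` when `c` is not addable. -/
noncomputable def addCell (μ : YoungDiagram) (c : ℕ × ℕ) : YoungDiagram :=
  if hc : IsAddable μ c then ⟨insert c μ.cells, hc.isLowerSet_insert⟩ else μ

open Classical in
/-- Equal to `μ` when `c` is not removable. -/
noncomputable def removeCell (μ : YoungDiagram) (c : ℕ × ℕ) : YoungDiagram :=
  if hc : IsRemovable μ c then ⟨μ.cells.erase c, hc.isLowerSet_erase⟩ else μ

theorem IsAddable.mem_addCell (hc : IsAddable μ c) {x : ℕ × ℕ} :
    x ∈ μ.addCell c ↔ x = c ∨ x ∈ μ := by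
  simp [addCell, dif_pos hc]

theorem IsRemovable.mem_removeCell (hc : IsRemovable μ c) {x : ℕ × ℕ} :
    x ∈ μ.removeCell c ↔ x ∈ μ ∧ x ≠ c := by
  simp [removeCell, dif_pos hc, and_comm]

theorem IsAddable.card_addCell (hc : IsAddable μ c) : (μ.addCell c).card = μ.card + 1 := by
  simp only [addCell, dif_pos hc]
  exact card_insert_of_notMem hc.1

theorem IsRemovable.card_removeCell (hc : IsRemovable μ c) :
    (μ.removeCell c).card = μ.card - 1 := by
  simp only [removeCell, dif_pos hc]
  exact card_erase_of_mem hc.1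

theorem IsAddable.isRemovable_addCell (hc : IsAddable μ c) : IsRemovable (μ.addCell c) c := by
  refine ⟨hc.mem_addCell.2 (Or.inl rfl), fun x hcx hx => ?_⟩
  rcases hc.mem_addCell.1 hx with hxc | hx
  · exact hcx.ne' hxc
  · exact hc.1 (μ.isLowerSet hcx.le hx)

theorem IsRemovable.isAddable_removeCell (hc : IsRemovable μ c) : IsAddable (μ.removeCell c) c :=
  ⟨fun h => (hc.mem_removeCell.1 h).2 rfl, fun _ hx =>
    hc.mem_removeCell.2 ⟨μ.isLowerSet hx.le hc.1, hx.ne⟩⟩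

theorem IsAddable.removeCell_addCell (hc : IsAddable μ c) : (μ.addCell c).removeCell c = μ := by
  refine SetLike.ext fun x => ?_
  rw [hc.isRemovable_addCell.mem_removeCell, hc.mem_addCell]
  constructor
  · rintro ⟨rfl | hx, hne⟩
    exacts [absurd rfl hne, hx]
  · intro hx
    exact ⟨Or.inr hx, fun h => hc.1 (h ▸ hx)⟩

theorem IsRemovable.addCell_removeCell (hc : IsRemovable μ c) :
    (μ.removeCell c).addCell c = μ := by
  refine SetLike.ext fun x => ?_
  rw [hc.isAddable_removeCell.mem_addCell, hc.mem_removeCell]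
  constructor
  · rintro (rfl | hx)
    exacts [hc.1, hx.1]
  · intro hx
    by_cases h : x = c
    exacts [Or.inl h, Or.inr ⟨hx, h⟩]

theorem IsAddable.ne_of_mem (hc : IsAddable μ c) {x : ℕ × ℕ} (hx : x ∈ μ) : x ≠ c :=
  fun h => hc.1 (h ▸ hx)

theorem IsAddable.snd_eq_rowLen (hc : IsAddable μ c) : c.2 = μ.rowLen c.1 := by
  obtain ⟨i, j⟩ := c
  have hle : μ.rowLen i ≤ j := not_lt.1 fun h => hc.1 (mem_iff_lt_rowLen.2 h)
  cases j with
  | zero => exact (Nat.le_zero.1 hle).symm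
  | succ j =>
    have := mem_iff_lt_rowLen.1 (hc.2 (i, j) (Prod.mk_lt_mk_of_le_of_lt le_rfl j.lt_succ_self))
    exact le_antisymm this hle

theorem IsAddable.fst_le_colLen (hc : IsAddable μ c) : c.1 ≤ μ.colLen 0 := by
  obtain ⟨i, j⟩ := c
  cases i with
  | zero => exact Nat.zero_le _
  | succ i =>
    exact mem_iff_lt_colLen.1
      (hc.2 (i, 0) (Prod.mk_lt_mk_of_lt_of_le i.lt_succ_self (Nat.zero_le j)))

open Classical in
noncomputable def addableCells (μ : YoungDiagram) : Finset (ℕ × ℕ) :=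
  (range (μ.colLen 0 + 1) ×ˢ range (μ.rowLen 0 + 1)).filter (IsAddable μ)

open Classical in
noncomputable def removableCells (μ : YoungDiagram) : Finset (ℕ × ℕ) :=
  μ.cells.filter (IsRemovable μ)

theorem mem_addableCells : c ∈ μ.addableCells ↔ IsAddable μ c := by
  classical
  refine ⟨fun h => (mem_filter.1 h).2, fun hc => mem_filter.2 ⟨?_, hc⟩⟩
  rw [mem_product, mem_range, mem_range, Nat.lt_succ_iff, Nat.lt_succ_iff, hc.snd_eq_rowLen]
  exact ⟨hc.fst_le_colLen, μ.rowLen_anti 0 c.1 (Nat.zero_le _)⟩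

theorem mem_removableCells : c ∈ μ.removableCells ↔ IsRemovable μ c := by
  classical
  simp only [removableCells, mem_filter, mem_cells]
  exact ⟨And.right, fun hc => ⟨hc.1, hc⟩⟩

theorem snd_lt_card (hc : c ∈ μ) : c.2 < μ.card :=
  calc c.2 < μ.rowLen c.1 := mem_iff_lt_rowLen.1 hc
    _ = (μ.row c.1).card := μ.rowLen_eq_card
    _ ≤ μ.card := card_le_card (filter_subset _ _)

theorem fst_lt_card (hc : c ∈ μ) : c.1 < μ.card :=
  calc c.1 < μ.colLen c.2 := mem_iff_lt_colLen.1 hc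
    _ = (μ.col c.2).card := μ.colLen_eq_card
    _ ≤ μ.card := card_le_card (filter_subset _ _)

theorem finite_setOf_card_eq (n : ℕ) : {μ : YoungDiagram | μ.card = n}.Finite := by
  refine ((range n ×ˢ range n).powerset.finite_toSet.preimage
    (Function.Injective.injOn fun _ _ => YoungDiagram.ext)).subset fun μ (hμ : μ.card = n) => ?_
  simp only [Set.mem_preimage, coe_powerset, Set.mem_powerset_iff, coe_subset]
  intro x hx
  rw [mem_product, mem_range, mem_range, ← hμ]
  exact ⟨fst_lt_card hx, snd_lt_card hx⟩

noncomputable def ofCard (n : ℕ) : Finset YoungDiagram :=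
  (finite_setOf_card_eq n).toFinset

theorem mem_ofCard {n : ℕ} : μ ∈ ofCard n ↔ μ.card = n :=
  Set.Finite.mem_toFinset _

theorem ofCard_zero : ofCard 0 = {⊥} := by
  ext μ
  rw [mem_ofCard, mem_singleton, YoungDiagram.card, Finset.card_eq_zero, ← cells_bot]
  exact ⟨fun h => YoungDiagram.ext h, fun h => h ▸ rfl⟩

theorem sum_addCell_eq_sum_removeCell {M : Type*} [AddCommMonoid M] (n : ℕ)
    (f : YoungDiagram → YoungDiagram → M) :
    ∑ μ ∈ ofCard n, ∑ c ∈ μ.addableCells, f μ (μ.addCell c) =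
      ∑ ν ∈ ofCard (n + 1), ∑ c ∈ ν.removableCells, f (ν.removeCell c) ν := by
  rw [sum_sigma', sum_sigma']
  refine sum_nbij' (fun p => ⟨p.1.addCell p.2, p.2⟩) (fun q => ⟨q.1.removeCell q.2, q.2⟩)
    ?_ ?_ ?_ ?_ ?_
  · simp only [mem_sigma, mem_ofCard, mem_addableCells, mem_removableCells]
    rintro ⟨μ, c⟩ ⟨hμ, hc⟩
    exact ⟨hμ ▸ hc.card_addCell, hc.isRemovable_addCell⟩
  · simp only [mem_sigma, mem_ofCard, mem_addableCells, mem_removableCells]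
    rintro ⟨ν, c⟩ ⟨hν, hc⟩
    refine ⟨by rw [hc.card_removeCell, hν, Nat.add_sub_cancel], hc.isAddable_removeCell⟩
  · simp only [mem_sigma, mem_addableCells]
    rintro ⟨μ, c⟩ ⟨-, hc⟩
    rw [hc.removeCell_addCell]
  · simp only [mem_sigma, mem_removableCells]
    rintro ⟨ν, c⟩ ⟨-, hc⟩
    rw [hc.addCell_removeCell]
  · simp only [mem_sigma, mem_addableCells]
    rintro ⟨μ, c⟩ ⟨-, hc⟩
    rw [hc.removeCell_addCell]

end YoungDiagram

abbrev BoundedSSYT (d : ℕ) (μ : YoungDiagram) :=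
  {T : SemistandardYoungTableau μ // ∀ i j : ℕ, (i, j) ∈ μ → T i j < d}

abbrev StandardTableau (n : ℕ) (μ : YoungDiagram) :=
  {T : Fin n ≃ {c : ℕ × ℕ // c ∈ μ.cells} // IsStandard T}

instance (d : ℕ) (μ : YoungDiagram) : Finite (BoundedSSYT d μ) := by
  refine Finite.of_injective
    (fun T (x : {c : ℕ × ℕ // c ∈ μ.cells}) => (⟨T.1 x.1.1 x.1.2, T.2 _ _ x.2⟩ : Fin d))
    fun T T' h => Subtype.ext <| SemistandardYoungTableau.ext fun i j => ?_
  by_cases hij : (i, j) ∈ μ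
  · exact congrArg Fin.val (congrFun h ⟨(i, j), hij⟩)
  · rw [T.1.zeros hij, T'.1.zeros hij]

theorem BoundedSSYT.sigma_ext {d : ℕ} {ι : Type*} {shape : ι → YoungDiagram}
    {x y : Σ a, BoundedSSYT d (shape a)} (h₁ : x.1 = y.1)
    (h₂ : ∀ i j, x.2.1 i j = y.2.1 i j) : x = y := by
  obtain ⟨a, T⟩ := x
  obtain ⟨b, T'⟩ := y
  obtain rfl : a = b := h₁
  congr
  exact Subtype.ext (SemistandardYoungTableau.ext h₂)

theorem StandardTableau.sigma_ext {n : ℕ} {ι : Type*} {shape : ι → YoungDiagram}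
    {x y : Σ a, StandardTableau n (shape a)} (h₁ : x.1 = y.1)
    (h₂ : ∀ k, (x.2.1 k : ℕ × ℕ) = y.2.1 k) : x = y := by
  obtain ⟨a, T⟩ := x
  obtain ⟨b, T'⟩ := y
  obtain rfl : a = b := h₁
  congr
  exact Subtype.ext (Equiv.ext fun k => Subtype.ext (h₂ k))

namespace SemistandardYoungTableau

open YoungDiagram

def ofAdjacent (μ : YoungDiagram) (f : ℕ → ℕ → ℕ)
    (hrow : ∀ i j, (i, j + 1) ∈ μ → f i j ≤ f i (j + 1))
    (hcol : ∀ i j, (i + 1, j) ∈ μ → f i j < f (i + 1) j)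
    (hzero : ∀ i j, (i, j) ∉ μ → f i j = 0) : SemistandardYoungTableau μ where
  entry := f
  row_weak' {i j₁ j₂} hj h := by
    induction j₂, hj using Nat.le_induction with
    | base => exact hrow i j₁ h
    | succ j₂ hj ih => exact (ih (μ.up_left_mem le_rfl j₂.le_succ h)).trans (hrow i j₂ h)
  col_strict' {i₁ i₂ j} hi h := by
    induction i₂, hi using Nat.le_induction with
    | base => exact hcol i₁ j h
    | succ i₂ hi ih => exact (ih (μ.up_left_mem i₂.le_succ le_rfl h)).trans (hcol i₂ j h)
  zeros' := hzero _ _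

/-! ### Row insertion

The value `insertVal x i` enters row `i` at column `insertCol x i`, and the entry it displaces
there enters row `i + 1`; `insertRow x` is the first row in which it lands outside `μ`. -/

section RowInsertion

variable {μ : YoungDiagram} (T : SemistandardYoungTableau μ) (x : ℕ) {i j y : ℕ}

theorem exists_bump (i y : ℕ) : ∃ j, (i, j) ∉ μ ∨ y < T i j :=
  ⟨μ.rowLen i, Or.inl fun h => (mem_iff_lt_rowLen.1 h).false⟩

noncomputable def bumpCol (i y : ℕ) : ℕ :=
  Nat.find (T.exists_bump i y)

theorem bumpCol_le (h : (i, j) ∉ μ ∨ y < T i j) : T.bumpCol i y ≤ j :=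
  Nat.find_min' _ h

theorem mem_and_apply_le_of_lt_bumpCol (h : j < T.bumpCol i y) : (i, j) ∈ μ ∧ T i j ≤ y := by
  simpa using Nat.find_min (T.exists_bump i y) h

theorem lt_apply_bumpCol (h : (i, T.bumpCol i y) ∈ μ) : y < T i (T.bumpCol i y) :=
  (Nat.find_spec (T.exists_bump i y)).resolve_left (not_not_intro h)

theorem bumpCol_eq (h : (i, j) ∉ μ ∨ y < T i j)
    (hlt : ∀ j' < j, (i, j') ∈ μ ∧ T i j' ≤ y) : T.bumpCol i y = j :=
  (Nat.find_eq_iff _).2 ⟨h, fun j' hj' => by simpa using hlt j' hj'⟩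

noncomputable def insertVal : ℕ → ℕ
  | 0 => x
  | i + 1 => T i (T.bumpCol i (insertVal i))

noncomputable def insertCol (i : ℕ) : ℕ :=
  T.bumpCol i (T.insertVal x i)

theorem insertVal_succ (i : ℕ) : T.insertVal x (i + 1) = T i (T.insertCol x i) :=
  rfl

theorem mem_and_apply_le_of_lt_insertCol (h : j < T.insertCol x i) :
    (i, j) ∈ μ ∧ T i j ≤ T.insertVal x i :=
  T.mem_and_apply_le_of_lt_bumpCol h

theorem insertVal_lt_apply_insertCol (h : (i, T.insertCol x i) ∈ μ) :
    T.insertVal x i < T i (T.insertCol x i) :=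
  T.lt_apply_bumpCol h

theorem exists_insertCol_notMem : ∃ i, (i, T.insertCol x i) ∉ μ :=
  ⟨μ.colLen 0, fun h => (mem_iff_lt_colLen.1 (μ.up_left_mem le_rfl (Nat.zero_le _) h)).false⟩

noncomputable def insertRow : ℕ :=
  Nat.find (T.exists_insertCol_notMem x)

noncomputable def insertCell : ℕ × ℕ :=
  (T.insertRow x, T.insertCol x (T.insertRow x))

theorem insertCell_notMem : T.insertCell x ∉ μ :=
  Nat.find_spec (T.exists_insertCol_notMem x)

theorem insertRow_le (h : (i, T.insertCol x i) ∉ μ) : T.insertRow x ≤ i :=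
  Nat.find_min' _ h

theorem mem_of_lt_insertRow (h : i < T.insertRow x) : (i, T.insertCol x i) ∈ μ :=
  not_not.1 (Nat.find_min (T.exists_insertCol_notMem x) h)

theorem insertVal_lt_succ (h : i < T.insertRow x) : T.insertVal x i < T.insertVal x (i + 1) :=
  T.insertVal_lt_apply_insertCol x (T.mem_of_lt_insertRow x h)

theorem insertCol_succ_le (i : ℕ) : T.insertCol x (i + 1) ≤ T.insertCol x i := by
  refine T.bumpCol_le (or_iff_not_imp_left.2 fun hmem => ?_)
  exact T.col_strict i.lt_succ_self (not_not.1 hmem)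

theorem insertCol_antitone : Antitone (T.insertCol x) :=
  antitone_nat_of_succ_le (T.insertCol_succ_le x)

theorem isAddable_insertCell : IsAddable μ (T.insertCell x) := by
  refine ⟨T.insertCell_notMem x, fun ⟨a, b⟩ hab => ?_⟩
  obtain ⟨ha, hb⟩ | ⟨ha, hb⟩ := Prod.lt_iff.1 hab <;> simp only [insertCell] at ha hb
  · exact μ.up_left_mem le_rfl (hb.trans (T.insertCol_antitone x ha.le))
      (T.mem_of_lt_insertRow x ha)
  · exact μ.up_left_mem ha le_rfl (T.mem_and_apply_le_of_lt_insertCol x hb).1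

noncomputable def insertEntry (a b : ℕ) : ℕ :=
  if a ≤ T.insertRow x ∧ b = T.insertCol x a then T.insertVal x a else T a b

variable {a b : ℕ}

theorem insertEntry_insertCol (h : a ≤ T.insertRow x) :
    T.insertEntry x a (T.insertCol x a) = T.insertVal x a :=
  if_pos ⟨h, rfl⟩

theorem insertEntry_of_not (h : ¬(a ≤ T.insertRow x ∧ b = T.insertCol x a)) :
    T.insertEntry x a b = T a b :=
  if_neg h

theorem mem_addCell_insertCell :
    (a, b) ∈ μ.addCell (T.insertCell x) ↔
      (a = T.insertRow x ∧ b = T.insertCol x a) ∨ (a, b) ∈ μ := by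
  rw [(T.isAddable_insertCell x).mem_addCell, insertCell, Prod.mk.injEq]
  constructor <;> rintro (⟨rfl, rfl⟩ | h) <;> simp_all

theorem mem_addCell_of_le_insertRow (h : a ≤ T.insertRow x) :
    (a, T.insertCol x a) ∈ μ.addCell (T.insertCell x) := by
  rw [T.mem_addCell_insertCell x]
  rcases h.lt_or_eq with h | h
  exacts [Or.inr (T.mem_of_lt_insertRow x h), Or.inl ⟨h, rfl⟩]

theorem insertEntry_eq_zero (h : (a, b) ∉ μ.addCell (T.insertCell x)) :
    T.insertEntry x a b = 0 := by
  rw [insertEntry_of_not]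
  · exact T.zeros fun hμ => h ((T.mem_addCell_insertCell x).2 (Or.inr hμ))
  · rintro ⟨ha, rfl⟩
    exact h (T.mem_addCell_of_le_insertRow x ha)

theorem insertEntry_le_succ (h : (a, b + 1) ∈ μ.addCell (T.insertCell x)) :
    T.insertEntry x a b ≤ T.insertEntry x a (b + 1) := by
  by_cases hb : a ≤ T.insertRow x ∧ b = T.insertCol x a
  · obtain ⟨ha, rfl⟩ := hb
    rw [T.insertEntry_insertCol x ha, T.insertEntry_of_not x (by omega)]
    have hμ : (a, T.insertCol x a + 1) ∈ μ :=
      ((T.mem_addCell_insertCell x).1 h).resolve_left (by omega)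
    exact (T.insertVal_lt_apply_insertCol x (μ.up_left_mem le_rfl (Nat.le_succ _) hμ)).le.trans
      (T.row_weak (lt_add_one _) hμ)
  by_cases hb' : a ≤ T.insertRow x ∧ b + 1 = T.insertCol x a
  · rw [T.insertEntry_of_not x hb, hb'.2, T.insertEntry_insertCol x hb'.1]
    exact (T.mem_and_apply_le_of_lt_insertCol x (by omega)).2
  · rw [T.insertEntry_of_not x hb, T.insertEntry_of_not x hb']
    have hμ : (a, b + 1) ∈ μ := ((T.mem_addCell_insertCell x).1 h).resolve_left
      fun h => hb' ⟨h.1.le, h.2⟩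
    exact T.row_weak (lt_add_one _) hμ

theorem insertEntry_lt_succ (h : (a + 1, b) ∈ μ.addCell (T.insertCell x)) :
    T.insertEntry x a b < T.insertEntry x (a + 1) b := by
  by_cases hA : a + 1 ≤ T.insertRow x ∧ b = T.insertCol x (a + 1)
  · obtain ⟨ha, rfl⟩ := hA
    have hval := T.insertVal_lt_apply_insertCol x (T.mem_of_lt_insertRow x ha)
    rw [T.insertEntry_insertCol x ha, insertVal_succ]
    rcases (T.insertCol_succ_le x a).lt_or_eq with hlt | heq
    · rw [T.insertEntry_of_not x fun h => hlt.ne h.2]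
      exact (T.mem_and_apply_le_of_lt_insertCol x hlt).2.trans_lt hval
    · rw [heq, T.insertEntry_insertCol x (by omega)]
      exact hval
  have hμ : (a + 1, b) ∈ μ := ((T.mem_addCell_insertCell x).1 h).resolve_left
    fun h => hA ⟨h.1.le, h.2⟩
  rw [T.insertEntry_of_not x hA]
  by_cases hB : a ≤ T.insertRow x ∧ b = T.insertCol x a
  · obtain ⟨ha, rfl⟩ := hB
    have hcol : (a, T.insertCol x a) ∈ μ := μ.up_left_mem a.le_succ le_rfl hμ
    rw [T.insertEntry_insertCol x ha]
    exact (T.insertVal_lt_apply_insertCol x hcol).trans (T.col_strict a.lt_succ_self hμ)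
  · rw [T.insertEntry_of_not x hB]
    exact T.col_strict a.lt_succ_self hμ

noncomputable def rowInsert : SemistandardYoungTableau (μ.addCell (T.insertCell x)) :=
  ofAdjacent _ (T.insertEntry x) (fun _ _ => T.insertEntry_le_succ x)
    (fun _ _ => T.insertEntry_lt_succ x) (fun _ _ => T.insertEntry_eq_zero x)

theorem rowInsert_apply : T.rowInsert x a b = T.insertEntry x a b :=
  rfl

variable {d : ℕ} (hT : ∀ i j, (i, j) ∈ μ → T i j < d) (hx : x < d)
include hT hx

theorem insertVal_lt (h : i ≤ T.insertRow x) : T.insertVal x i < d := by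
  induction i with
  | zero => exact hx
  | succ i _ => exact hT _ _ (T.mem_of_lt_insertRow x h)

theorem rowInsert_lt (h : (a, b) ∈ μ.addCell (T.insertCell x)) : T.rowInsert x a b < d := by
  by_cases hab : a ≤ T.insertRow x ∧ b = T.insertCol x a
  · obtain ⟨ha, rfl⟩ := hab
    rw [rowInsert_apply, T.insertEntry_insertCol x ha]
    exact T.insertVal_lt x hT hx ha
  · rw [rowInsert_apply, T.insertEntry_of_not x hab]
    refine hT a b ?_
    exact ((T.mem_addCell_insertCell x).1 h).resolve_left fun h' => hab ⟨h'.1.le, h'.2⟩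

end RowInsertion

/-! ### Reverse row insertion

Starting from the cell `c`, the value `ejectVal r` leaves row `r` and replaces, in row `r - 1`,
the rightmost entry smaller than it, at column `ejectCol (r - 1)`; `ejectVal 0` leaves the
tableau. -/

section ReverseRowInsertion

variable {μ : YoungDiagram} {c : ℕ × ℕ} (U : SemistandardYoungTableau (μ.addCell c))
  {r j y a b : ℕ}

noncomputable def unbumpCol (r y : ℕ) : ℕ :=
  Nat.findGreatest (fun j => (r, j) ∈ μ ∧ U r j < y) (μ.rowLen r)

theorem unbumpCol_spec (h : (r, j) ∈ μ ∧ U r j < y) :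
    (r, U.unbumpCol r y) ∈ μ ∧ U r (U.unbumpCol r y) < y :=
  Nat.findGreatest_spec (P := fun j => (r, j) ∈ μ ∧ U r j < y) (mem_iff_lt_rowLen.1 h.1).le h

theorem le_unbumpCol (h : (r, j) ∈ μ ∧ U r j < y) : j ≤ U.unbumpCol r y :=
  Nat.le_findGreatest (P := fun j => (r, j) ∈ μ ∧ U r j < y) (mem_iff_lt_rowLen.1 h.1).le h

theorem le_apply_of_unbumpCol_lt (h : U.unbumpCol r y < j) (hj : (r, j) ∈ μ) : y ≤ U r j :=
  not_lt.1 fun hlt => Nat.findGreatest_is_greatest h (mem_iff_lt_rowLen.1 hj).le ⟨hj, hlt⟩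

theorem unbumpCol_eq (h : (r, j) ∈ μ ∧ U r j < y)
    (hgt : ∀ j', j < j' → (r, j') ∈ μ → y ≤ U r j') : U.unbumpCol r y = j :=
  le_antisymm
    (not_lt.1 fun hlt => (U.unbumpCol_spec h).2.not_ge (hgt _ hlt (U.unbumpCol_spec h).1))
    (U.le_unbumpCol h)

noncomputable def ejectVal (r : ℕ) : ℕ :=
  if r < c.1 then U r (U.unbumpCol r (ejectVal (r + 1))) else U c.1 c.2
termination_by c.1 - r

noncomputable def ejectCol (r : ℕ) : ℕ :=
  U.unbumpCol r (U.ejectVal (r + 1))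

theorem ejectVal_of_lt (h : r < c.1) : U.ejectVal r = U r (U.ejectCol r) := by
  rw [ejectVal, if_pos h, ejectCol]

theorem ejectVal_fst : U.ejectVal c.1 = U c.1 c.2 := by
  rw [ejectVal, if_neg (lt_irrefl _)]

noncomputable def ejectEntry (a b : ℕ) : ℕ :=
  if a < c.1 ∧ b = U.ejectCol a then U.ejectVal (a + 1) else if (a, b) = c then 0 else U a b

theorem ejectEntry_ejectCol (h : a < c.1) : U.ejectEntry a (U.ejectCol a) = U.ejectVal (a + 1) :=
  if_pos ⟨h, rfl⟩

theorem ejectEntry_of_not (h : ¬(a < c.1 ∧ b = U.ejectCol a)) (hne : (a, b) ≠ c) :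
    U.ejectEntry a b = U a b := by
  rw [ejectEntry, if_neg h, if_neg hne]

variable (hc : IsAddable μ c)
include hc

theorem ejectCol_spec_of_mem (hr : r < c.1) (hj : (r + 1, j) ∈ μ.addCell c)
    (hval : U (r + 1) j = U.ejectVal (r + 1)) :
    (r, U.ejectCol r) ∈ μ ∧ U r (U.ejectCol r) < U.ejectVal (r + 1) ∧
      j ≤ U.ejectCol r := by
  have hν : (r, j) ∈ μ.addCell c := (μ.addCell c).up_left_mem r.le_succ le_rfl hj
  have hμ : (r, j) ∈ μ := (hc.mem_addCell.1 hν).resolve_left fun h => by simp [← h] at hr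
  have hw : (r, j) ∈ μ ∧ U r j < U.ejectVal (r + 1) :=
    ⟨hμ, hval ▸ U.col_strict r.lt_succ_self hj⟩
  exact ⟨(U.unbumpCol_spec hw).1, (U.unbumpCol_spec hw).2, U.le_unbumpCol hw⟩

theorem exists_apply_eq_ejectVal (hr : r ≤ c.1) :
    ∃ j, c.2 ≤ j ∧ (r, j) ∈ μ.addCell c ∧ U r j = U.ejectVal r := by
  induction hr using Nat.decreasingInduction with
  | self => exact ⟨c.2, le_rfl, hc.mem_addCell.2 (Or.inl rfl), U.ejectVal_fst.symm⟩
  | of_succ r hr ih =>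
    obtain ⟨j, hcj, hj, hval⟩ := ih
    obtain ⟨hmem, -, hle⟩ := U.ejectCol_spec_of_mem hc hr hj hval
    exact ⟨U.ejectCol r, hcj.trans hle, hc.mem_addCell.2 (Or.inr hmem),
      (U.ejectVal_of_lt hr).symm⟩

theorem ejectCol_spec (hr : r < c.1) :
    (r, U.ejectCol r) ∈ μ ∧ U r (U.ejectCol r) < U.ejectVal (r + 1) ∧
      c.2 ≤ U.ejectCol r := by
  obtain ⟨j, hcj, hj, hval⟩ := U.exists_apply_eq_ejectVal hc hr
  obtain ⟨hmem, hlt, hle⟩ := U.ejectCol_spec_of_mem hc hr hj hval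
  exact ⟨hmem, hlt, hcj.trans hle⟩

theorem ejectCol_succ_le (hr : r + 1 < c.1) : U.ejectCol (r + 1) ≤ U.ejectCol r :=
  (U.ejectCol_spec_of_mem hc (r.lt_succ_self.trans hr)
    (hc.mem_addCell.2 (Or.inr (U.ejectCol_spec hc hr).1)) (U.ejectVal_of_lt hr).symm).2.2

theorem ejectVal_lt_succ (hr : r < c.1) : U.ejectVal r < U.ejectVal (r + 1) :=
  U.ejectVal_of_lt hr ▸ (U.ejectCol_spec hc hr).2.1

theorem ejectVal_lt {d : ℕ} (hU : ∀ i j, (i, j) ∈ μ.addCell c → U i j < d)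
    (hr : r ≤ c.1) : U.ejectVal r < d := by
  obtain ⟨j, -, hj, hval⟩ := U.exists_apply_eq_ejectVal hc hr
  exact hval ▸ hU r j hj

theorem ejectEntry_eq_zero (h : (a, b) ∉ μ) : U.ejectEntry a b = 0 := by
  by_cases hp : a < c.1 ∧ b = U.ejectCol a
  · exact absurd (hp.2 ▸ (U.ejectCol_spec hc hp.1).1) h
  by_cases hne : (a, b) = c
  · rw [ejectEntry, if_neg hp, if_pos hne]
  · rw [U.ejectEntry_of_not hp hne]
    exact U.zeros fun hν => (hc.mem_addCell.1 hν).elim hne h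

theorem ejectEntry_le_succ (h : (a, b + 1) ∈ μ) :
    U.ejectEntry a b ≤ U.ejectEntry a (b + 1) := by
  have hab : (a, b) ∈ μ := μ.up_left_mem le_rfl b.le_succ h
  have hν : (a, b + 1) ∈ μ.addCell c := hc.mem_addCell.2 (Or.inr h)
  by_cases hb : a < c.1 ∧ b = U.ejectCol a
  · obtain ⟨ha, rfl⟩ := hb
    rw [U.ejectEntry_ejectCol ha, U.ejectEntry_of_not (by omega) (hc.ne_of_mem h)]
    exact U.le_apply_of_unbumpCol_lt (lt_add_one _) h
  rw [U.ejectEntry_of_not hb (hc.ne_of_mem hab)]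
  by_cases hb' : a < c.1 ∧ b + 1 = U.ejectCol a
  · rw [hb'.2, U.ejectEntry_ejectCol hb'.1]
    exact ((U.row_weak (by omega) (hc.mem_addCell.2 (Or.inr (U.ejectCol_spec hc hb'.1).1))).trans_lt
      (U.ejectCol_spec hc hb'.1).2.1).le
  · rw [U.ejectEntry_of_not hb' (hc.ne_of_mem h)]
    exact U.row_weak b.lt_succ_self hν

theorem ejectEntry_lt_succ (h : (a + 1, b) ∈ μ) : U.ejectEntry a b < U.ejectEntry (a + 1) b := by
  have hab : (a, b) ∈ μ := μ.up_left_mem a.le_succ le_rfl h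
  have hν : (a + 1, b) ∈ μ.addCell c := hc.mem_addCell.2 (Or.inr h)
  by_cases hA : a + 1 < c.1 ∧ b = U.ejectCol (a + 1)
  · obtain ⟨ha, rfl⟩ := hA
    have hlt := (U.ejectCol_spec hc ha).2.1
    rw [U.ejectEntry_ejectCol ha]
    by_cases hb : U.ejectCol (a + 1) = U.ejectCol a
    · rw [hb, U.ejectEntry_ejectCol (by omega), U.ejectVal_of_lt ha]
      exact hlt
    · rw [U.ejectEntry_of_not (fun h => hb h.2) (hc.ne_of_mem hab)]
      exact (U.col_strict a.lt_succ_self hν).trans hlt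
  rw [U.ejectEntry_of_not hA (hc.ne_of_mem h)]
  by_cases hB : a < c.1 ∧ b = U.ejectCol a
  · obtain ⟨ha, rfl⟩ := hB
    rw [U.ejectEntry_ejectCol ha]
    obtain ha' | ha' := (Nat.add_one_le_of_lt ha).lt_or_eq
    · have hlt : U.ejectCol (a + 1) < U.ejectCol a :=
        (U.ejectCol_succ_le hc ha').lt_of_ne fun h => hA ⟨ha', h.symm⟩
      exact (U.ejectVal_lt_succ hc ha').trans_le (U.le_apply_of_unbumpCol_lt hlt h)
    · have hrow := mem_iff_lt_rowLen.1 h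
      rw [ha', ← hc.snd_eq_rowLen] at hrow
      exact absurd (U.ejectCol_spec hc ha).2.2 (not_le.2 hrow)
  · rw [U.ejectEntry_of_not hB (hc.ne_of_mem hab)]
    exact U.col_strict a.lt_succ_self hν

noncomputable def ejectTableau : SemistandardYoungTableau μ :=
  ofAdjacent μ U.ejectEntry (fun _ _ => U.ejectEntry_le_succ hc)
    (fun _ _ => U.ejectEntry_lt_succ hc) (fun _ _ => U.ejectEntry_eq_zero hc)

theorem ejectTableau_apply : U.ejectTableau hc a b = U.ejectEntry a b :=
  rfl

theorem ejectTableau_lt {d : ℕ} (hU : ∀ i j, (i, j) ∈ μ.addCell c → U i j < d)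
    (h : (a, b) ∈ μ) : U.ejectTableau hc a b < d := by
  rw [ejectTableau_apply]
  by_cases hp : a < c.1 ∧ b = U.ejectCol a
  · obtain ⟨ha, rfl⟩ := hp
    rw [U.ejectEntry_ejectCol ha]
    exact U.ejectVal_lt hc hU ha
  · rw [U.ejectEntry_of_not hp (hc.ne_of_mem h)]
    exact hU a b (hc.mem_addCell.2 (Or.inr h))

end ReverseRowInsertion

section Inverse

variable {μ : YoungDiagram} {r a b : ℕ}

section EjectInsert

variable (T : SemistandardYoungTableau μ) (x : ℕ)

theorem unbumpCol_rowInsert (hr : r < T.insertRow x) :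
    (T.rowInsert x).unbumpCol r (T.insertVal x (r + 1)) = T.insertCol x r := by
  have hmem := T.mem_of_lt_insertRow x hr
  refine unbumpCol_eq _ ⟨hmem, ?_⟩ fun j hj hμ => ?_
  · rw [rowInsert_apply, T.insertEntry_insertCol x hr.le]
    exact T.insertVal_lt_succ x hr
  · rw [rowInsert_apply, T.insertEntry_of_not x fun h => hj.ne' h.2, insertVal_succ]
    exact T.row_weak hj hμ

theorem ejectVal_rowInsert (hr : r ≤ T.insertRow x) :
    (T.rowInsert x).ejectVal r = T.insertVal x r := by
  induction hr using Nat.decreasingInduction with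
  | self => exact (T.rowInsert x).ejectVal_fst.trans (T.insertEntry_insertCol x le_rfl)
  | of_succ r hr ih =>
    rw [ejectVal_of_lt _ hr, ejectCol, ih, T.unbumpCol_rowInsert x hr, rowInsert_apply,
      T.insertEntry_insertCol x hr.le]

theorem ejectCol_rowInsert (hr : r < T.insertRow x) :
    (T.rowInsert x).ejectCol r = T.insertCol x r := by
  rw [ejectCol, T.ejectVal_rowInsert x hr, T.unbumpCol_rowInsert x hr]

theorem ejectTableau_rowInsert : (T.rowInsert x).ejectTableau (T.isAddable_insertCell x) = T := by
  ext a b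
  rw [ejectTableau_apply, ejectEntry]
  split_ifs with hp hcell
  · obtain ⟨ha, rfl⟩ := hp
    rw [T.ejectCol_rowInsert x ha, T.ejectVal_rowInsert x ha, insertVal_succ]
  · exact (T.zeros (hcell ▸ T.insertCell_notMem x)).symm
  · rw [rowInsert_apply, T.insertEntry_of_not x]
    rintro ⟨ha, rfl⟩
    obtain ha | rfl := ha.lt_or_eq
    · exact hp ⟨ha, (T.ejectCol_rowInsert x ha).symm⟩
    · exact hcell rfl

theorem ejectVal_zero_rowInsert : (T.rowInsert x).ejectVal 0 = x :=
  T.ejectVal_rowInsert x (Nat.zero_le _)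

end EjectInsert

section InsertEject

variable {c : ℕ × ℕ} (U : SemistandardYoungTableau (μ.addCell c)) (hc : IsAddable μ c)
include hc

theorem bumpCol_ejectTableau (hr : r < c.1) :
    (U.ejectTableau hc).bumpCol r (U.ejectVal r) = U.ejectCol r := by
  obtain ⟨hmem, hlt, -⟩ := U.ejectCol_spec hc hr
  refine bumpCol_eq _ (Or.inr ?_) fun j hj => ⟨μ.up_left_mem le_rfl hj.le hmem, ?_⟩
  · rw [ejectTableau_apply, U.ejectEntry_ejectCol hr, U.ejectVal_of_lt hr]
    exact hlt
  · rw [ejectTableau_apply, U.ejectEntry_of_not (fun h => hj.ne h.2)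
      (hc.ne_of_mem (μ.up_left_mem le_rfl hj.le hmem)), U.ejectVal_of_lt hr]
    exact U.row_weak hj (hc.mem_addCell.2 (Or.inr hmem))

theorem bumpCol_ejectTableau_fst :
    (U.ejectTableau hc).bumpCol c.1 (U.ejectVal c.1) = c.2 := by
  refine bumpCol_eq _ (Or.inl hc.1) fun j hj => ?_
  have hmem : (c.1, j) ∈ μ := mem_iff_lt_rowLen.2 (hc.snd_eq_rowLen ▸ hj)
  refine ⟨hmem, ?_⟩
  rw [ejectTableau_apply, U.ejectEntry_of_not (fun h => (lt_irrefl _ h.1)) (hc.ne_of_mem hmem),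
    ejectVal_fst]
  exact U.row_weak hj (hc.mem_addCell.2 (Or.inl rfl))

theorem insertVal_ejectTableau (hr : r ≤ c.1) :
    (U.ejectTableau hc).insertVal (U.ejectVal 0) r = U.ejectVal r := by
  induction r with
  | zero => rfl
  | succ r ih =>
    rw [insertVal_succ, insertCol, ih (by omega), U.bumpCol_ejectTableau hc (by omega),
      ejectTableau_apply, U.ejectEntry_ejectCol (by omega)]

theorem insertCol_ejectTableau (hr : r < c.1) :
    (U.ejectTableau hc).insertCol (U.ejectVal 0) r = U.ejectCol r := by
  rw [insertCol, U.insertVal_ejectTableau hc hr.le, U.bumpCol_ejectTableau hc hr]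

theorem insertCol_ejectTableau_fst :
    (U.ejectTableau hc).insertCol (U.ejectVal 0) c.1 = c.2 := by
  rw [insertCol, U.insertVal_ejectTableau hc le_rfl, U.bumpCol_ejectTableau_fst hc]

theorem insertRow_ejectTableau : (U.ejectTableau hc).insertRow (U.ejectVal 0) = c.1 := by
  refine le_antisymm (insertRow_le _ _ ?_)
    (not_lt.1 fun hlt => (U.ejectTableau hc).insertCell_notMem (U.ejectVal 0) ?_)
  · rw [U.insertCol_ejectTableau_fst hc]
    exact hc.1
  · rw [insertCell, U.insertCol_ejectTableau hc hlt]
    exact (U.ejectCol_spec hc hlt).1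

theorem insertCell_ejectTableau : (U.ejectTableau hc).insertCell (U.ejectVal 0) = c := by
  rw [insertCell, U.insertRow_ejectTableau hc, U.insertCol_ejectTableau_fst hc]

theorem rowInsert_ejectTableau_apply :
    (U.ejectTableau hc).rowInsert (U.ejectVal 0) a b = U a b := by
  rw [rowInsert_apply, insertEntry, U.insertRow_ejectTableau hc]
  split_ifs with hp
  · obtain ⟨ha, rfl⟩ := hp
    rw [U.insertVal_ejectTableau hc ha]
    obtain ha | rfl := ha.lt_or_eq
    · rw [U.insertCol_ejectTableau hc ha, U.ejectVal_of_lt ha]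
    · rw [U.insertCol_ejectTableau_fst hc, ejectVal_fst]
  · rw [ejectTableau_apply, U.ejectEntry_of_not]
    · rintro ⟨ha, rfl⟩
      exact hp ⟨ha.le, (U.insertCol_ejectTableau hc ha).symm⟩
    · rintro rfl
      exact hp ⟨le_rfl, (U.insertCol_ejectTableau_fst hc).symm⟩

end InsertEject

end Inverse

end SemistandardYoungTableau

open SemistandardYoungTableau YoungDiagram

noncomputable def rowInsertEquiv (d : ℕ) (μ : YoungDiagram) :
    Fin d × BoundedSSYT d μ ≃ Σ c : μ.addableCells, BoundedSSYT d (μ.addCell c) where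
  toFun p := ⟨⟨p.2.1.insertCell p.1, mem_addableCells.2 (p.2.1.isAddable_insertCell p.1)⟩,
    ⟨p.2.1.rowInsert p.1, fun _ _ => p.2.1.rowInsert_lt p.1 p.2.2 p.1.2⟩⟩
  invFun q :=
    (⟨q.2.1.ejectVal 0, q.2.1.ejectVal_lt (mem_addableCells.1 q.1.2) q.2.2 (Nat.zero_le _)⟩,
      ⟨q.2.1.ejectTableau (mem_addableCells.1 q.1.2),
        fun _ _ => q.2.1.ejectTableau_lt (mem_addableCells.1 q.1.2) q.2.2⟩)
  left_inv p :=
    Prod.ext (Fin.ext (p.2.1.ejectVal_zero_rowInsert p.1))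
      (Subtype.ext (p.2.1.ejectTableau_rowInsert p.1))
  right_inv q :=
    BoundedSSYT.sigma_ext (Subtype.ext (q.2.1.insertCell_ejectTableau (mem_addableCells.1 q.1.2)))
      fun _ _ => q.2.1.rowInsert_ejectTableau_apply (mem_addableCells.1 q.1.2)

theorem mul_ssytCount_eq_sum_addableCells (d : ℕ) (μ : YoungDiagram) :
    d * ssytCount d μ = ∑ c ∈ μ.addableCells, ssytCount d (μ.addCell c) :=
  calc d * ssytCount d μ = Nat.card (Fin d × BoundedSSYT d μ) := by
        rw [Nat.card_prod, Nat.card_eq_fintype_card, Fintype.card_fin]; rfl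
    _ = Nat.card (Σ c : μ.addableCells, BoundedSSYT d (μ.addCell c)) :=
        Nat.card_congr (rowInsertEquiv d μ)
    _ = ∑ c ∈ μ.addableCells, ssytCount d (μ.addCell c) := by
        rw [Nat.card_sigma]
        exact sum_coe_sort μ.addableCells fun c => ssytCount d (μ.addCell c)

/-! ### Deleting the largest entry of a standard tableau -/

namespace YoungDiagram

variable {μ : YoungDiagram} {c : ℕ × ℕ} {n : ℕ}

def IsRemovable.cellsEquiv (hc : IsRemovable μ c) :
    {x // x ∈ (μ.removeCell c).cells} ≃
      {y : {x // x ∈ μ.cells} // y ≠ ⟨c, hc.1⟩} where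
  toFun x := ⟨⟨x, (hc.mem_removeCell.1 x.2).1⟩,
    fun h => (hc.mem_removeCell.1 x.2).2 (congrArg Subtype.val h)⟩
  invFun y := ⟨y.1, hc.mem_removeCell.2 ⟨y.1.2, fun h => y.2 (Subtype.ext h)⟩⟩
  left_inv _ := rfl
  right_inv _ := rfl

noncomputable def IsRemovable.extend (hc : IsRemovable μ c)
    (S : Fin n ≃ {x // x ∈ (μ.removeCell c).cells}) : Fin (n + 1) ≃ {x // x ∈ μ.cells} :=
  finSuccEquivLast.trans ((S.trans hc.cellsEquiv).optionCongr.trans (Equiv.optionSubtypeNe _))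

theorem IsRemovable.extend_last (hc : IsRemovable μ c)
    (S : Fin n ≃ {x // x ∈ (μ.removeCell c).cells}) :
    (hc.extend S (Fin.last n) : ℕ × ℕ) = c := by
  simp [extend]

theorem IsRemovable.extend_castSucc (hc : IsRemovable μ c)
    (S : Fin n ≃ {x // x ∈ (μ.removeCell c).cells}) (i : Fin n) :
    (hc.extend S i.castSucc : ℕ × ℕ) = S i := by
  simp [extend, cellsEquiv]

theorem IsRemovable.lt_of_rel_extend (hc : IsRemovable μ c)
    {S : Fin n ≃ {x // x ∈ (μ.removeCell c).cells}} {R : ℕ × ℕ → ℕ × ℕ → Prop}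
    (hR : ∀ x y, R x y → x < y) (hS : ∀ i j, R (S i) (S j) → i < j) (a b : Fin (n + 1)) :
    R (hc.extend S a) (hc.extend S b) → a < b := by
  induction b using Fin.lastCases with
  | last =>
    induction a using Fin.lastCases with
    | last => exact fun h => absurd (hR _ _ h) (lt_irrefl _)
    | cast i => exact fun _ => Fin.castSucc_lt_last i
  | cast j =>
    induction a using Fin.lastCases with
    | last =>
      rw [hc.extend_last, hc.extend_castSucc]
      exact fun h => absurd (hc.mem_removeCell.1 (S j).2).1 (hc.2 _ (hR _ _ h))
    | cast i =>
      rw [hc.extend_castSucc, hc.extend_castSucc, Fin.castSucc_lt_castSucc_iff]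
      exact hS i j

theorem IsRemovable.isStandard_extend (hc : IsRemovable μ c)
    {S : Fin n ≃ {x // x ∈ (μ.removeCell c).cells}} (hS : IsStandard S) :
    IsStandard (hc.extend S) :=
  ⟨fun a b h₁ h₂ => hc.lt_of_rel_extend (R := fun x y => x.1 = y.1 ∧ x.2 < y.2)
      (fun _ _ h => Prod.lt_of_le_of_lt h.1.le h.2) (fun i j h => hS.1 i j h.1 h.2)
      a b ⟨h₁, h₂⟩,
    fun a b h₁ h₂ => hc.lt_of_rel_extend (R := fun x y => x.2 = y.2 ∧ x.1 < y.1)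
      (fun _ _ h => Prod.lt_of_lt_of_le h.2 h.1.le) (fun i j h => hS.2 i j h.1 h.2)
      a b ⟨h₁, h₂⟩⟩

variable {T : Fin (n + 1) ≃ {x // x ∈ μ.cells}}

theorem isRemovable_apply_last (hT : IsStandard T) : IsRemovable μ (T (Fin.last n)) := by
  refine ⟨(T (Fin.last n)).2, fun x hlt hx => ?_⟩
  set c : ℕ × ℕ := (T (Fin.last n) : ℕ × ℕ)
  have hnext : ∀ y ∈ μ, y.1 = c.1 ∧ c.2 < y.2 ∨ y.2 = c.2 ∧ c.1 < y.1 → False := by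
    intro y hy hyc
    obtain ⟨b, hb⟩ := T.surjective ⟨y, hy⟩
    refine (Fin.le_last b).not_gt ?_
    rcases hyc with ⟨h1, h2⟩ | ⟨h1, h2⟩
    · exact hT.1 _ _ (by rw [hb]; exact h1.symm) (by rw [hb]; exact h2)
    · exact hT.2 _ _ (by rw [hb]; exact h1.symm) (by rw [hb]; exact h2)
  rcases Prod.lt_iff.1 hlt with ⟨h1, h2⟩ | ⟨h1, h2⟩
  · exact hnext (c.1 + 1, c.2) (μ.up_left_mem h1 h2 hx) (Or.inr ⟨rfl, c.1.lt_succ_self⟩)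
  · exact hnext (c.1, c.2 + 1) (μ.up_left_mem h1 h2 hx) (Or.inl ⟨rfl, c.2.lt_succ_self⟩)

noncomputable def IsRemovable.restrict (hc : IsRemovable μ (T (Fin.last n))) :
    Fin n ≃ {x // x ∈ (μ.removeCell (T (Fin.last n))).cells} :=
  ((finSuccAboveEquiv (Fin.last n)).trans
    (T.subtypeEquiv fun _ => T.injective.ne_iff.symm)).trans hc.cellsEquiv.symm

theorem IsRemovable.restrict_apply (hc : IsRemovable μ (T (Fin.last n))) (i : Fin n) :
    (hc.restrict i : ℕ × ℕ) = T i.castSucc := by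
  simp [restrict, cellsEquiv, finSuccAboveEquiv_apply]

theorem IsRemovable.isStandard_restrict (hc : IsRemovable μ (T (Fin.last n)))
    (hT : IsStandard T) : IsStandard hc.restrict := by
  refine ⟨fun i j => ?_, fun i j => ?_⟩ <;>
    rw [hc.restrict_apply, hc.restrict_apply, ← Fin.castSucc_lt_castSucc_iff]
  exacts [hT.1 _ _, hT.2 _ _]

end YoungDiagram

noncomputable def removeLastEquiv (n : ℕ) (μ : YoungDiagram) :
    StandardTableau (n + 1) μ ≃
      Σ c : μ.removableCells, StandardTableau n (μ.removeCell c) where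
  toFun T := ⟨⟨T.1 (Fin.last n), mem_removableCells.2 (isRemovable_apply_last T.2)⟩,
    (isRemovable_apply_last T.2).restrict, (isRemovable_apply_last T.2).isStandard_restrict T.2⟩
  invFun q := ⟨(mem_removableCells.1 q.1.2).extend q.2.1,
    (mem_removableCells.1 q.1.2).isStandard_extend q.2.2⟩
  left_inv T := Subtype.ext <| Equiv.ext fun a => Subtype.ext <| by
    induction a using Fin.lastCases with
    | last => exact IsRemovable.extend_last _ _
    | cast i => rw [IsRemovable.extend_castSucc, IsRemovable.restrict_apply]
  right_inv q := StandardTableau.sigma_ext (Subtype.ext (IsRemovable.extend_last _ _)) fun i => by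
    rw [IsRemovable.restrict_apply, IsRemovable.extend_castSucc]

theorem sytCount_succ (n : ℕ) (μ : YoungDiagram) :
    sytCount (n + 1) μ = ∑ c ∈ μ.removableCells, sytCount n (μ.removeCell c) :=
  calc sytCount (n + 1) μ
      = Nat.card (Σ c : μ.removableCells, StandardTableau n (μ.removeCell c)) :=
        Nat.card_congr (removeLastEquiv n μ)
    _ = ∑ c ∈ μ.removableCells, sytCount n (μ.removeCell c) := by
        rw [Nat.card_sigma]
        exact sum_coe_sort μ.removableCells fun c => sytCount n (μ.removeCell c)

theorem SemistandardYoungTableau.le_apply_of_mem {μ : YoungDiagram}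
    (T : SemistandardYoungTableau μ) {i j : ℕ} (h : (i, j) ∈ μ) :
    i ≤ T i j := by
  induction i with
  | zero => exact Nat.zero_le _
  | succ i ih =>
    exact ih (μ.up_left_mem i.le_succ le_rfl h) |>.trans_lt (T.col_strict i.lt_succ_self h)

theorem ssytCount_bot (d : ℕ) : ssytCount d ⊥ = 1 := by
  refine Nat.card_eq_one_iff_unique.2 ⟨⟨fun T T' => Subtype.ext ?_⟩,
    ⟨⟨SemistandardYoungTableau.highestWeight ⊥,
      fun _ _ h => absurd h (YoungDiagram.notMem_bot _)⟩⟩⟩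
  exact SemistandardYoungTableau.ext fun i j => by
    rw [T.1.zeros (YoungDiagram.notMem_bot _), T'.1.zeros (YoungDiagram.notMem_bot _)]

theorem sytCount_zero_bot : sytCount 0 ⊥ = 1 := by
  have : IsEmpty {c : ℕ × ℕ // c ∈ (⊥ : YoungDiagram).cells} :=
    ⟨fun c => YoungDiagram.notMem_bot _ c.2⟩
  refine Nat.card_eq_one_iff_unique.2 ⟨⟨fun T T' => Subtype.ext (Equiv.ext finZeroElim)⟩,
    ⟨⟨Equiv.equivOfIsEmpty _ _, finZeroElim, finZeroElim⟩⟩⟩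

theorem ssytCount_eq_zero_of_lt_colLen {d : ℕ} {μ : YoungDiagram} (h : d < μ.colLen 0) :
    ssytCount d μ = 0 := by
  refine Nat.card_eq_zero.2 (Or.inl ⟨fun T => ?_⟩)
  have hd : (d, 0) ∈ μ := YoungDiagram.mem_iff_lt_colLen.2 h
  exact (T.1.le_apply_of_mem hd).not_gt (T.2 d 0 hd)

theorem pow_eq_sum_ofCard (d n : ℕ) :
    d ^ n = ∑ μ ∈ ofCard n, ssytCount d μ * sytCount n μ := by
  induction n with
  | zero => simp [ofCard_zero, ssytCount_bot, sytCount_zero_bot]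
  | succ n ih =>
    calc d ^ (n + 1) = ∑ μ ∈ ofCard n, d * ssytCount d μ * sytCount n μ := by
          rw [pow_succ', ih, mul_sum]
          simp_rw [mul_assoc]
      _ = ∑ μ ∈ ofCard n, ∑ c ∈ μ.addableCells,
            ssytCount d (μ.addCell c) * sytCount n μ := by
          simp_rw [mul_ssytCount_eq_sum_addableCells, sum_mul]
      _ = ∑ ν ∈ ofCard (n + 1), ∑ c ∈ ν.removableCells,
            ssytCount d ν * sytCount n (ν.removeCell c) :=
          sum_addCell_eq_sum_removeCell n fun μ ν => ssytCount d ν * sytCount n μ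
      _ = ∑ ν ∈ ofCard (n + 1), ssytCount d ν * sytCount (n + 1) ν := by
          simp_rw [sytCount_succ, mul_sum]

/-- The total dimension identity of Schur–Weyl duality:
`d^n = Σ_λ s_λ(d) · f^λ`, the sum running over all partitions `λ` of `n` with at most
`d` parts (rows). -/
theorem schur_weyl_dimension_count (n d : ℕ) (S : Finset YoungDiagram)
    (hS : ∀ lam : YoungDiagram, lam ∈ S ↔ (lam.card = n ∧ lam.colLen 0 ≤ d)) :
    d ^ n = ∑ lam ∈ S, ssytCount d lam * sytCount n lam := by
  rw [pow_eq_sum_ofCard d n]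
  refine (sum_subset (fun μ hμ => mem_ofCard.2 ((hS μ).1 hμ).1) fun μ hμ hμS => ?_).symm
  rw [ssytCount_eq_zero_of_lt_colLen (not_le.1 fun h => hμS ((hS μ).2 ⟨mem_ofCard.1 hμ, h⟩)),
    zero_mul]
end
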